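/- arXiv:0805.0585 — 2 statements merged into one kernel-verified Lean document; each statement's English description precedes it below -/
import Mathlib

section
/- Let T be a spanning tree of a connected weighted graph (G, c). T has maximal weight among all spanning trees if and only if for every edge e ∈ E − T, the weight c(e) is at most the minimum weight of the edges on the unique path in T joining the endpoints of e. -/
/-!
Everything rests on the exchange property of trees: deleting an edge `xy` from a tree `T` leaves
two components, and adding an edge `uv` joining them gives a tree again; `uv` joins them exactly
when `xy` lies on the `T`-path from `u` to `v`. If an edge `xy` on the path of a non-tree edge
`uv` were lighter than `uv`, exchanging `xy` for `uv` would give a heavier spanning tree.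
Conversely, any spanning tree `T'` is turned into `T` by exchanges: an edge `ab` of `T'` not in
`T` is replaced by an edge `xy` of the `T`-path from `a` to `b` that crosses the cut of `T' - ab`.
The hypothesis gives `c(ab) ≤ c(xy)`, so the weight never decreases, while `|T' \ T|` drops.
-/

namespace SimpleGraph

variable {V : Type*} {G H T : SimpleGraph V}

lemma Preconnected.reachable_deleteEdges_or (hG : G.Preconnected) (x y w : V) :
    (G.deleteEdges {s(x, y)}).Reachable x w ∨ (G.deleteEdges {s(x, y)}).Reachable y w := by
  by_contra hw
  obtain ⟨⟨⟨a, b⟩, hab⟩, -, ha, hb⟩ := (hG x w).some.exists_boundary_dart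
    {z | (G.deleteEdges {s(x, y)}).Reachable x z ∨ (G.deleteEdges {s(x, y)}).Reachable y z}
    (Or.inl .rfl) hw
  simp only [Set.mem_ofPred_eq] at ha hb
  by_cases he : s(a, b) = s(x, y)
  · rcases Sym2.eq_iff.mp he with ⟨-, rfl⟩ | ⟨-, rfl⟩
    · exact hb (Or.inr .rfl)
    · exact hb (Or.inl .rfl)
  · have hD : (G.deleteEdges {s(x, y)}).Adj a b := by simpa [he] using hab
    exact hb (ha.imp (·.trans hD.reachable) (·.trans hD.reachable))

theorem IsTree.deleteEdges_sup_edge_of_not_reachable (hT : T.IsTree) {x y u v : V}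
    (huv : ¬ (T.deleteEdges {s(x, y)}).Reachable u v) :
    (T.deleteEdges {s(x, y)} ⊔ edge u v).IsTree := by
  set D := T.deleteEdges {s(x, y)}
  refine ⟨?_, (hT.isAcyclic.anti (deleteEdges_le _)).sup_edge_of_not_reachable huv⟩
  have hD : D ≤ D ⊔ edge u v := le_sup_left
  have hreach := hT.connected.preconnected.reachable_deleteEdges_or x y
  have hxy : (D ⊔ edge u v).Reachable x y := by
    have hedge : (D ⊔ edge u v).Reachable u v :=
      Adj.reachable (Or.inr ((edge_adj ..).mpr ⟨Or.inl ⟨rfl, rfl⟩, fun h => huv (h ▸ .rfl)⟩))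
    rcases hreach u with hu | hu <;> rcases hreach v with hv | hv
    · exact absurd (hu.symm.trans hv) huv
    · exact (hu.mono hD).trans (hedge.trans (hv.mono hD).symm)
    · exact (hv.mono hD).trans (hedge.symm.trans (hu.mono hD).symm)
    · exact absurd (hu.symm.trans hv) huv
  refine (connected_iff_exists_forall_reachable _).2 ⟨x, fun w => ?_⟩
  rcases hreach w with h | h
  · exact h.mono hD
  · exact hxy.trans (h.mono hD)

theorem IsAcyclic.not_reachable_deleteEdges_of_mem_edges (hT : T.IsAcyclic) {u v x y : V}
    {p : T.Walk u v} (hp : p.IsPath) (he : s(x, y) ∈ p.edges) :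
    ¬ (T.deleteEdges {s(x, y)}).Reachable u v := by
  classical
  rw [reachable_deleteEdges_iff_exists_walk]
  rintro ⟨q, hq⟩
  have : p = q.bypass := congrArg Subtype.val
    ((hT.subsingleton_path u v).elim ⟨p, hp⟩ ⟨q.bypass, q.bypass_isPath⟩)
  exact hq (q.edges_bypass_subset_edges (this ▸ he))

lemma Walk.exists_mem_edges_not_reachable {u v : V} (p : G.Walk u v) (huv : ¬ H.Reachable u v) :
    ∃ x y, s(x, y) ∈ p.edges ∧ ¬ H.Reachable x y := by
  obtain ⟨⟨⟨x, y⟩, hxy⟩, hd, hx, hy⟩ := p.exists_boundary_dart {z | H.Reachable u z} .rfl huv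
  exact ⟨x, y, List.mem_map_of_mem hd, fun h => hy (hx.trans h)⟩

section Weight

variable {M : Type*} [AddCommMonoid M]

noncomputable def weight (c : Sym2 V → M) (H : SimpleGraph V) : M :=
  ∑ᶠ e ∈ H.edgeSet, c e

lemma edgeSet_deleteEdges_sup_edge {e : Sym2 V} {u v : V} (huv : u ≠ v) :
    (H.deleteEdges {e} ⊔ edge u v).edgeSet = insert s(u, v) (H.edgeSet \ {e}) := by
  rw [edgeSet_sup, edgeSet_deleteEdges, edgeSet_edge_of_ne huv, Set.union_comm,
    Set.singleton_union]

lemma weight_deleteEdges_sup_edge (c : Sym2 V → M) (hH : H.edgeSet.Finite) {e : Sym2 V}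
    (he : e ∈ H.edgeSet) {u v : V} (huv : ¬ H.Adj u v) (hne : u ≠ v) :
    weight c (H.deleteEdges {e} ⊔ edge u v) + c e = weight c H + c s(u, v) := by
  rw [weight, weight, edgeSet_deleteEdges_sup_edge hne,
    finsum_mem_insert _ (fun h => huv h.1) hH.sdiff, ← Set.insert_sdiff_self_of_mem he,
    finsum_mem_insert _ (by simp) hH.sdiff, Set.insert_sdiff_self_of_mem he]
  abel

end Weight

section Exchange

variable [Finite V] {M : Type*} [AddCommMonoid M] [PartialOrder M] [IsOrderedCancelAddMonoid M]
  {c : Sym2 V → M}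

theorem IsTree.le_of_mem_edges_of_forall_weight_le (hT : T.IsTree) (hTG : T ≤ G)
    (hmax : ∀ T' ≤ G, T'.IsTree → weight c T' ≤ weight c T) {u v : V} (huv : G.Adj u v)
    (hTuv : ¬ T.Adj u v) {p : T.Walk u v} (hp : p.IsPath) {e : Sym2 V} (he : e ∈ p.edges) :
    c s(u, v) ≤ c e := by
  induction e with | h x y =>
  have hT' := hT.deleteEdges_sup_edge_of_not_reachable
    (hT.isAcyclic.not_reachable_deleteEdges_of_mem_edges hp he)
  have hT'G : T.deleteEdges {s(x, y)} ⊔ edge u v ≤ G :=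
    sup_le ((deleteEdges_le _).trans hTG) ((edge_le_iff _).mpr (.inr huv))
  have hw := weight_deleteEdges_sup_edge c T.edgeSet.toFinite (p.edges_subset_edgeSet he) hTuv
    huv.ne
  refine le_of_add_le_add_left (a := weight c T) ?_
  calc weight c T + c s(u, v)
      = weight c (T.deleteEdges {s(x, y)} ⊔ edge u v) + c s(x, y) := hw.symm
    _ ≤ weight c T + c s(x, y) := add_le_add_left (hmax _ hT'G hT') _

theorem IsTree.weight_le_of_forall_le_of_mem_edges (hT : T.IsTree) (hTG : T ≤ G)
    (hc : ∀ u v, G.Adj u v → ¬ T.Adj u v →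
      ∀ p : T.Walk u v, p.IsPath → ∀ e ∈ p.edges, c s(u, v) ≤ c e)
    {T' : SimpleGraph V} (hT'G : T' ≤ G) (hT' : T'.IsTree) : weight c T' ≤ weight c T := by
  induction hn : (T'.edgeSet \ T.edgeSet).ncard using Nat.strong_induction_on generalizing T' with
  | _ n ih =>
  by_cases hsub : T'.edgeSet ⊆ T.edgeSet
  · have := hT.connected.nonempty
    rw [(maximal_isAcyclic_iff_isTree.mpr hT').eq_of_le hT.isAcyclic
      (edgeSet_subset_edgeSet.mp hsub)]
  obtain ⟨e, heT', heT⟩ := Set.not_subset.mp hsub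
  induction e with | h a b =>
  obtain ⟨p, hp⟩ := hT.connected.exists_isPath a b
  obtain ⟨x, y, hxyp, hxy⟩ := p.exists_mem_edges_not_reachable
    (isBridge_iff.mp (isAcyclic_iff_forall_adj_isBridge.mp hT'.isAcyclic heT'))
  have hTxy : T.Adj x y := p.adj_of_mem_edges hxyp
  have hT'xy : ¬ T'.Adj x y := fun h' => hxy <| Adj.reachable <|
    (deleteEdges_adj ..).mpr ⟨h', fun h => heT (Set.mem_singleton_iff.mp h ▸ hTxy)⟩
  have hT'' := hT'.deleteEdges_sup_edge_of_not_reachable hxy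
  have hT''G : T'.deleteEdges {s(a, b)} ⊔ edge x y ≤ G :=
    sup_le ((deleteEdges_le _).trans hT'G) ((edge_le_iff _).mpr (.inr (hTG hTxy)))
  have hlt : ((T'.deleteEdges {s(a, b)} ⊔ edge x y).edgeSet \ T.edgeSet).ncard < n := by
    rw [← hn, edgeSet_deleteEdges_sup_edge hTxy.ne,
      Set.insert_sdiff_of_mem _ (show s(x, y) ∈ T.edgeSet from hTxy), Set.sdiff_sdiff_comm]
    exact Set.ncard_sdiff_singleton_lt_of_mem ⟨heT', heT⟩
  have hw := weight_deleteEdges_sup_edge c T'.edgeSet.toFinite heT' hT'xy hTxy.ne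
  calc weight c T' ≤ weight c (T'.deleteEdges {s(a, b)} ⊔ edge x y) := by
        refine le_of_add_le_add_right (a := c s(a, b)) ?_
        rw [hw]
        exact add_le_add_right (hc a b (hT'G heT') heT p hp _ hxyp) _
    _ ≤ weight c T := ih _ hlt hT''G hT'' rfl

end Exchange

end SimpleGraph

theorem maximal_spanning_tree_iff_general {V : Type} [Fintype V] (G : SimpleGraph V)
    (c : Sym2 V → ℝ) (T : SimpleGraph V) (hTG : T ≤ G)
    (hT : T.IsTree) :
    (∀ T' : SimpleGraph V, T' ≤ G → T'.IsTree →
        ∑ᶠ e ∈ T'.edgeSet, c e ≤ ∑ᶠ e ∈ T.edgeSet, c e) ↔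
      (∀ u v : V, G.Adj u v → ¬ T.Adj u v →
        ∀ p : T.Walk u v, p.IsPath → ∀ e' ∈ p.edges, c s(u, v) ≤ c e') :=
  ⟨fun hmax _ _ huv hTuv _ hp _ he =>
    hT.le_of_mem_edges_of_forall_weight_le hTG hmax huv hTuv hp he,
    fun hc _ hT'G hT' => hT.weight_le_of_forall_le_of_mem_edges hTG hc hT'G hT'⟩

/-- a spanning tree `T` of a finite connected weighted graph
`(G, c)` has maximal weight among all spanning trees if and only if, for every
edge `e` of `G` not in `T` with endpoints `u`, `v`, the weight `c e` is at
most the weight of every edge on the (unique) path in `T` joining `u` and `v`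
(i.e. at most their minimum). -/
theorem maximal_spanning_tree_iff {V : Type} [Fintype V] (G : SimpleGraph V)
    (c : Sym2 V → ℝ) (hG : G.Connected) (T : SimpleGraph V) (hTG : T ≤ G)
    (hT : T.IsTree) :
    (∀ T' : SimpleGraph V, T' ≤ G → T'.IsTree →
        ∑ᶠ e ∈ T'.edgeSet, c e ≤ ∑ᶠ e ∈ T.edgeSet, c e) ↔
      (∀ u v : V, G.Adj u v → ¬ T.Adj u v →
        ∀ p : T.Walk u v, p.IsPath → ∀ e' ∈ p.edges, c s(u, v) ≤ c e') :=
  maximal_spanning_tree_iff_general G c T hTG hT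
end

section
/- If D is the m × n incidence matrix of a finite directed graph without loops, with m vertices, n edges, and p connected components, then the rank of D is m − p; moreover the kernel of D equals the cycle (flow) space and the row space of D equals the cocycle (tension) space. -/
/-- A chain (walk in the underlying undirected graph) from `u` to `v` in the
digraph `(V, E, s, t)`: each step traverses an edge either forwards (`true`)
or backwards (`false`). -/
def IsChainL {V E : Type} (s t : E → V) : V → List (E × Bool) → V → Prop
  | u, [], v => u = v
  | u, (e, true) :: l, v => s e = u ∧ IsChainL s t (t e) l v
  | u, (e, false) :: l, v => t e = u ∧ IsChainL s t (s e) l v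

/-- The representative vectors of cycles (closed walks in the underlying
undirected graph with no repeated edge). -/
def cycleVecs {V E : Type} (s t : E → V) : Set (E → ℝ) :=
  {γ | ∃ (a : V) (l : List (E × Bool)), IsChainL s t a l a ∧
    (l.map Prod.fst).Nodup ∧
    ∀ e : E, ((e, true) ∈ l → γ e = 1) ∧ ((e, false) ∈ l → γ e = -1) ∧
      ((e, true) ∉ l ∧ (e, false) ∉ l → γ e = 0)}

/-- The representative vectors of cocycles `Ω(Y)`, `Y ⊆ V`. -/
def cocycleVecs {V E : Type} (s t : E → V) : Set (E → ℝ) :=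
  {ω | ∃ Y : Set V,
    ∀ e : E, (s e ∈ Y ∧ t e ∉ Y → ω e = 1) ∧ (s e ∉ Y ∧ t e ∈ Y → ω e = -1) ∧
      (¬(s e ∈ Y ∧ t e ∉ Y) ∧ ¬(s e ∉ Y ∧ t e ∈ Y) → ω e = 0)}

/-- The incidence matrix of a digraph without loops. -/
def incidenceMatrix {V E : Type} [DecidableEq V] (s t : E → V) :
    Matrix V E ℝ :=
  fun v e => if v = s e then 1 else if v = t e then -1 else 0

/-!
`Dᵀ f` is the edge vector `e ↦ f (s e) - f (t e)`, so `Dᵀ 1_Y` is the cocycle vector of `Y`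
and the row space of `D`, spanned by the `Dᵀ 1_{v}`, is the cocycle space. Moreover `Dᵀ f = 0`
exactly when `f` is constant on components, so `ker Dᵀ` has dimension `p` and rank–nullity gives
`rank D = m - p`.

`D` sends the vector of a chain from `u` to `w` to `1_u - 1_w`, so cycles are flows. Conversely,
say that `γ` flows along the dart `d` when `0 < dartSign d * γ d.1`; by conservation, if a flow `γ`
flows along a dart into `v`, it flows along some dart out of `v`. This gives a successor map on
the finite set of darts along which `γ` flows; a periodic orbit of it is a cycle of the graph
inside the support of `γ` (no edge occurs with both orientations). Subtracting the multiple of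
this cycle that cancels `γ` on one of its edges shrinks the support, and induction finishes.
-/

open Matrix Function

theorem Function.exists_mem_periodicPts {α : Type*} [Finite α] [Nonempty α] (f : α → α) :
    ∃ x, x ∈ periodicPts f := by
  obtain ⟨x⟩ := ‹Nonempty α›
  obtain ⟨m, n, heq, hne⟩ : ∃ m n, f^[m] x = f^[n] x ∧ m ≠ n := by
    simpa [Injective] using not_injective_infinite_finite (f^[·] x)
  wlog hmn : m < n generalizing m n
  · exact this n m heq.symm hne.symm (lt_of_le_of_ne (not_lt.1 hmn) hne.symm)
  refine ⟨f^[m] x, mk_mem_periodicPts (Nat.sub_pos_of_lt hmn) ?_⟩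
  rw [IsPeriodicPt, IsFixedPt, ← iterate_add_apply, Nat.sub_add_cancel hmn.le, heq]

variable {V E : Type}

section Darts

variable (s t : E → V)

def dartTail (d : E × Bool) : V := if d.2 then s d.1 else t d.1

def dartHead (d : E × Bool) : V := if d.2 then t d.1 else s d.1

variable {s t}

theorem isChainL_nil {u w : V} : IsChainL s t u [] w ↔ u = w := Iff.rfl

theorem isChainL_cons {u w : V} {d : E × Bool} {l : List (E × Bool)} :
    IsChainL s t u (d :: l) w ↔ dartTail s t d = u ∧ IsChainL s t (dartHead s t d) l w := by
  obtain ⟨e, _ | _⟩ := d <;> rfl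

theorem IsChainL.apply_eq {α : Type*} {f : V → α} (hf : ∀ e, f (s e) = f (t e))
    {u w : V} {l : List (E × Bool)} (h : IsChainL s t u l w) : f u = f w := by
  induction l generalizing u with
  | nil => exact congrArg f h
  | cons d l ih =>
    obtain ⟨rfl, hl⟩ := isChainL_cons.1 h
    rw [← ih hl]
    obtain ⟨e, _ | _⟩ := d <;> simp [dartTail, dartHead, hf]

theorem isChainL_map_range_iterate {α : Type*} (f : α → α) (dart : α → E × Bool)
    (hf : ∀ x, dartTail s t (dart (f x)) = dartHead s t (dart x)) (n : ℕ) (x : α) :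
    IsChainL s t (dartTail s t (dart x)) ((List.range n).map fun i => dart (f^[i] x))
      (dartTail s t (dart (f^[n] x))) := by
  induction n generalizing x with
  | zero => exact isChainL_nil.2 rfl
  | succ n ih =>
    rw [List.range_succ_eq_map, List.map_cons, List.map_map, isChainL_cons, ← hf]
    exact ⟨rfl, ih (f x)⟩

end Darts

def dartSign (d : E × Bool) : ℝ := if d.2 then 1 else -1

def chainVec [DecidableEq E] (l : List (E × Bool)) : E → ℝ :=
  (l.map fun d => Pi.single d.1 (dartSign d)).sum

section Incidence

variable [DecidableEq V] {s t : E → V}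

theorem incidenceMatrix_col {e : E} (he : s e ≠ t e) :
    (incidenceMatrix s t).col e = Pi.single (s e) 1 - Pi.single (t e) 1 := by
  ext v
  by_cases hs : v = s e <;> by_cases ht : v = t e <;>
    simp_all [incidenceMatrix]

theorem transpose_mulVec_incidenceMatrix [Fintype V] (hloop : ∀ e, s e ≠ t e) (f : V → ℝ)
    (e : E) : ((incidenceMatrix s t)ᵀ *ᵥ f) e = f (s e) - f (t e) := by
  change (incidenceMatrix s t).col e ⬝ᵥ f = _
  rw [incidenceMatrix_col (hloop e), sub_dotProduct, single_one_dotProduct, single_one_dotProduct]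

theorem incidenceMatrix_mulVec_single [Fintype E] [DecidableEq E] (hloop : ∀ e, s e ≠ t e)
    (d : E × Bool) : incidenceMatrix s t *ᵥ Pi.single d.1 (dartSign d) =
      Pi.single (dartTail s t d) 1 - Pi.single (dartHead s t d) 1 := by
  rw [mulVec_single, incidenceMatrix_col (hloop d.1), op_smul_eq_smul]
  obtain ⟨e, _ | _⟩ := d <;> simp [dartSign, dartTail, dartHead]

theorem IsChainL.incidenceMatrix_mulVec_chainVec [Fintype E] [DecidableEq E]
    (hloop : ∀ e, s e ≠ t e) {u w : V} {l : List (E × Bool)} (h : IsChainL s t u l w) :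
    incidenceMatrix s t *ᵥ chainVec l = Pi.single u 1 - Pi.single w 1 := by
  induction l generalizing u with
  | nil => simp [chainVec, isChainL_nil.1 h]
  | cons d l ih =>
    obtain ⟨rfl, hl⟩ := isChainL_cons.1 h
    rw [chainVec, List.map_cons, List.sum_cons, mulVec_add, incidenceMatrix_mulVec_single hloop,
      ← chainVec, ih hl, sub_add_sub_cancel]

theorem incidenceMatrix_dartHead (hloop : ∀ e, s e ≠ t e) (d : E × Bool) :
    incidenceMatrix s t (dartHead s t d) d.1 = -dartSign d := by
  obtain ⟨e, _ | _⟩ := d <;> simp [incidenceMatrix, dartHead, dartSign, (hloop e).symm]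

theorem exists_dartTail_eq_of_incidenceMatrix_ne_zero {v : V} {e : E}
    (h : incidenceMatrix s t v e ≠ 0) :
    ∃ b, dartTail s t (e, b) = v ∧ incidenceMatrix s t v e = dartSign (e, b) := by
  unfold incidenceMatrix at h ⊢
  split_ifs at h ⊢ with hs ht
  · exact ⟨true, hs.symm, rfl⟩
  · exact ⟨false, ht.symm, rfl⟩
  · exact absurd rfl h

theorem mem_cocycleVecs_iff [Fintype V] (hloop : ∀ e, s e ≠ t e) {ω : E → ℝ} :
    ω ∈ cocycleVecs s t ↔ ∃ Y : Set V, (incidenceMatrix s t)ᵀ *ᵥ Y.indicator 1 = ω := by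
  refine exists_congr fun Y => ⟨fun h => funext fun e => ?_, fun h e => ?_⟩
  · rw [transpose_mulVec_incidenceMatrix hloop]
    by_cases hs : s e ∈ Y <;> by_cases ht : t e ∈ Y <;> simp_all
  · subst h
    rw [transpose_mulVec_incidenceMatrix hloop]
    by_cases hs : s e ∈ Y <;> by_cases ht : t e ∈ Y <;> simp [hs, ht]

theorem span_cocycleVecs [Fintype V] (hloop : ∀ e, s e ≠ t e) :
    Submodule.span ℝ (cocycleVecs s t) = LinearMap.range (incidenceMatrix s t)ᵀ.mulVecLin := by
  have hcocycle : cocycleVecs s t =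
      (incidenceMatrix s t)ᵀ.mulVecLin '' Set.range fun Y : Set V => Y.indicator (1 : V → ℝ) := by
    ext ω
    simp only [mem_cocycleVecs_iff hloop, Set.mem_image, Set.exists_range_iff, mulVecLin_apply]
  have hindicator : Submodule.span ℝ (Set.range fun Y : Set V => Y.indicator (1 : V → ℝ)) = ⊤ := by
    refine eq_top_iff.2 ((Pi.basisFun ℝ V).span_eq.symm.trans_le (Submodule.span_mono ?_))
    rintro _ ⟨v, rfl⟩
    exact ⟨{v}, by simp⟩
  rw [hcocycle, Submodule.span_image, hindicator, Submodule.map_top]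

end Incidence

section Rank

variable [DecidableEq V] {s t : E → V}

theorem range_funLeft_quotMk_eq_ker [Fintype V] (hloop : ∀ e, s e ≠ t e) :
    LinearMap.range (LinearMap.funLeft ℝ ℝ (Quot.mk fun a b : V => ∃ l, IsChainL s t a l b)) =
      LinearMap.ker (incidenceMatrix s t)ᵀ.mulVecLin := by
  ext f
  have hker : f ∈ LinearMap.ker (incidenceMatrix s t)ᵀ.mulVecLin ↔ ∀ e, f (s e) = f (t e) := by
    simp only [LinearMap.mem_ker, mulVecLin_apply, funext_iff,
      transpose_mulVec_incidenceMatrix hloop, Pi.zero_apply, sub_eq_zero]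
  rw [hker]
  constructor
  · rintro ⟨g, rfl⟩ e
    exact congrArg g (Quot.sound ⟨[(e, true)], rfl, rfl⟩)
  · intro hf
    exact ⟨Quot.lift f fun a b ⟨_, h⟩ => h.apply_eq hf, rfl⟩

theorem finrank_ker_transpose_incidenceMatrix [Fintype V] (hloop : ∀ e, s e ≠ t e) :
    Module.finrank ℝ (LinearMap.ker (incidenceMatrix s t)ᵀ.mulVecLin) =
      Nat.card (Quot fun a b : V => ∃ l, IsChainL s t a l b) := by
  have : Fintype (Quot fun a b : V => ∃ l, IsChainL s t a l b) := Fintype.ofFinite _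
  rw [← range_funLeft_quotMk_eq_ker hloop, LinearMap.finrank_range_of_inj
    (LinearMap.funLeft_injective_of_surjective ℝ ℝ _ Quot.mk_surjective),
    Module.finrank_fintype_fun_eq_card, Nat.card_eq_fintype_card]

theorem rank_incidenceMatrix_add_card_quot [Fintype V] [Fintype E] (hloop : ∀ e, s e ≠ t e) :
    (incidenceMatrix s t).rank + Nat.card (Quot fun a b : V => ∃ l, IsChainL s t a l b) =
      Fintype.card V := by
  rw [← rank_transpose, ← finrank_ker_transpose_incidenceMatrix hloop, Matrix.rank,
    LinearMap.finrank_range_add_finrank_ker, Module.finrank_fintype_fun_eq_card]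

end Rank

section ChainVec

theorem mem_map_fst_iff {l : List (E × Bool)} {e : E} :
    e ∈ l.map Prod.fst ↔ (e, true) ∈ l ∨ (e, false) ∈ l := by
  simp [Bool.exists_bool, or_comm]

variable [DecidableEq E]

theorem chainVec_apply_of_notMem {l : List (E × Bool)} {e : E} (he : e ∉ l.map Prod.fst) :
    chainVec l e = 0 := by
  rw [chainVec, Pi.list_sum_apply, List.map_map]
  refine List.sum_eq_zero fun x hx => ?_
  obtain ⟨d, hd, rfl⟩ := List.mem_map.1 hx
  exact Pi.single_eq_of_ne (fun h : e = d.1 => he (h ▸ List.mem_map_of_mem hd)) _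

theorem chainVec_apply_of_mem {l : List (E × Bool)} (hl : (l.map Prod.fst).Nodup)
    {d : E × Bool} (hd : d ∈ l) : chainVec l d.1 = dartSign d := by
  induction l with
  | nil => simp at hd
  | cons d' l ih =>
    rw [List.map_cons, List.nodup_cons] at hl
    rw [chainVec, List.map_cons, List.sum_cons, Pi.add_apply, ← chainVec]
    rcases List.mem_cons.1 hd with rfl | hd
    · simp [chainVec_apply_of_notMem hl.1]
    · have hne : d.1 ≠ d'.1 := fun h => hl.1 (h ▸ List.mem_map_of_mem hd)
      simp [Pi.single_eq_of_ne hne, ih hl.2 hd]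

theorem cycle_conditions_iff_eq_chainVec {l : List (E × Bool)} (hl : (l.map Prod.fst).Nodup)
    {γ : E → ℝ} : (∀ e : E, ((e, true) ∈ l → γ e = 1) ∧ ((e, false) ∈ l → γ e = -1) ∧
      ((e, true) ∉ l ∧ (e, false) ∉ l → γ e = 0)) ↔ γ = chainVec l := by
  constructor
  · intro h
    ext e
    by_cases ht : (e, true) ∈ l
    · rw [(h e).1 ht, chainVec_apply_of_mem hl ht, dartSign, if_pos rfl]
    by_cases hf : (e, false) ∈ l
    · rw [(h e).2.1 hf, chainVec_apply_of_mem hl hf, dartSign, if_neg Bool.false_ne_true]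
    rw [(h e).2.2 ⟨ht, hf⟩, chainVec_apply_of_notMem (by simp [mem_map_fst_iff, ht, hf])]
  · rintro rfl e
    refine ⟨fun ht => chainVec_apply_of_mem hl ht, fun hf => chainVec_apply_of_mem hl hf,
      fun h => chainVec_apply_of_notMem (by simpa [mem_map_fst_iff] using h)⟩

theorem mem_cycleVecs_iff {s t : E → V} {γ : E → ℝ} :
    γ ∈ cycleVecs s t ↔
      ∃ a l, IsChainL s t a l a ∧ (l.map Prod.fst).Nodup ∧ γ = chainVec l := by
  refine exists_congr fun a => exists_congr fun l => and_congr_right fun _ => ?_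
  exact ⟨fun ⟨hl, h⟩ => ⟨hl, (cycle_conditions_iff_eq_chainVec hl).1 h⟩,
    fun ⟨hl, h⟩ => ⟨hl, (cycle_conditions_iff_eq_chainVec hl).2 h⟩⟩

end ChainVec

theorem dartSign_mul_self (d : E × Bool) : dartSign d * dartSign d = 1 := by
  obtain ⟨e, _ | _⟩ := d <;> simp [dartSign]

theorem eq_of_fst_eq_of_dartSign_mul_pos {γ : E → ℝ} {d d' : E × Bool}
    (hd : 0 < dartSign d * γ d.1) (hd' : 0 < dartSign d' * γ d'.1) (h : d.1 = d'.1) : d = d' := by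
  obtain ⟨e, b⟩ := d
  obtain ⟨e', b'⟩ := d'
  obtain rfl : e = e' := h
  cases b <;> cases b' <;> simp_all [dartSign] <;> linarith

section Flow

variable [Fintype E] [DecidableEq V] {s t : E → V}

theorem exists_dartTail_eq_dartHead_of_mulVec_eq_zero (hloop : ∀ e, s e ≠ t e) {γ : E → ℝ}
    (hγ : incidenceMatrix s t *ᵥ γ = 0) {d : E × Bool} (hd : 0 < dartSign d * γ d.1) :
    ∃ d', dartTail s t d' = dartHead s t d ∧ 0 < dartSign d' * γ d'.1 := by
  have hsum : ∑ e, incidenceMatrix s t (dartHead s t d) e * γ e = 0 := congrFun hγ _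
  have hin : incidenceMatrix s t (dartHead s t d) d.1 * γ d.1 ≠ 0 := by
    rw [incidenceMatrix_dartHead hloop, neg_mul]
    exact neg_ne_zero.2 hd.ne'
  obtain ⟨e, -, he⟩ :=
    Finset.exists_pos_of_sum_zero_of_exists_nonzero _ hsum ⟨d.1, Finset.mem_univ _, hin⟩
  obtain ⟨b, hb, hsign⟩ :=
    exists_dartTail_eq_of_incidenceMatrix_ne_zero (left_ne_zero_of_mul he.ne')
  exact ⟨(e, b), hb, hsign ▸ he⟩

theorem exists_cycle_of_mulVec_eq_zero (hloop : ∀ e, s e ≠ t e) {γ : E → ℝ}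
    (hγ : incidenceMatrix s t *ᵥ γ = 0) {e₀ : E} (he₀ : γ e₀ ≠ 0) :
    ∃ a l, IsChainL s t a l a ∧ (l.map Prod.fst).Nodup ∧ l ≠ [] ∧
      ∀ d ∈ l, 0 < dartSign d * γ d.1 := by
  let P := {d : E × Bool // 0 < dartSign d * γ d.1}
  have : Nonempty P := by
    refine ⟨⟨(e₀, decide (0 < γ e₀)), ?_⟩⟩
    rcases he₀.lt_or_gt with h | h
    · simp [dartSign, h.not_gt, h]
    · simp [dartSign, h]
  choose next hnext using fun d : P => exists_dartTail_eq_dartHead_of_mulVec_eq_zero hloop hγ d.2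
  let f : P → P := fun d => ⟨next d, (hnext d).2⟩
  obtain ⟨y, hy⟩ := exists_mem_periodicPts f
  refine ⟨dartTail s t y.1, (List.range (minimalPeriod f y)).map fun i => (f^[i] y).1,
    ?_, ?_, ?_, ?_⟩
  · simpa [iterate_minimalPeriod] using
      isChainL_map_range_iterate f Subtype.val (fun d => (hnext d).1) (minimalPeriod f y) y
  · rw [List.map_map, List.nodup_map_iff_inj_on List.nodup_range]
    intro i hi j hj h
    exact (iterate_eq_iterate_iff_of_lt_minimalPeriod (List.mem_range.1 hi)
      (List.mem_range.1 hj)).1 (Subtype.ext (eq_of_fst_eq_of_dartSign_mul_pos (f^[i] y).2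
        (f^[j] y).2 h))
  · simpa using (minimalPeriod_pos_of_mem_periodicPts hy).ne'
  · simp only [List.mem_map]
    rintro _ ⟨i, -, rfl⟩
    exact (f^[i] y).2

theorem span_cycleVecs_le_ker_incidenceMatrix (hloop : ∀ e, s e ≠ t e) :
    Submodule.span ℝ (cycleVecs s t) ≤ LinearMap.ker (incidenceMatrix s t).mulVecLin := by
  classical
  rw [Submodule.span_le]
  intro γ hγ
  obtain ⟨a, l, hchain, -, rfl⟩ := mem_cycleVecs_iff.1 hγ
  simp [hchain.incidenceMatrix_mulVec_chainVec hloop]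

theorem card_support_sub_smul_chainVec_lt [DecidableEq E] {γ : E → ℝ} {l : List (E × Bool)}
    (hnodup : (l.map Prod.fst).Nodup) (hpos : ∀ d ∈ l, 0 < dartSign d * γ d.1)
    {d : E × Bool} (hd : d ∈ l) :
    (Finset.univ.filter fun e => (γ - (γ d.1 * dartSign d) • chainVec l) e ≠ 0).card <
      (Finset.univ.filter (γ · ≠ 0)).card := by
  refine Finset.card_lt_card ((Finset.ssubset_iff_of_subset fun e => ?_).2 ⟨d.1, ?_, ?_⟩)
  · simp only [Finset.mem_filter, Finset.mem_univ, true_and]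
    refine mt fun he => ?_
    have hnotMem : e ∉ l.map Prod.fst := by
      intro hmem
      obtain ⟨d', hd', rfl⟩ := List.mem_map.1 hmem
      simpa [he] using hpos d' hd'
    simp [he, chainVec_apply_of_notMem hnotMem]
  · simpa using right_ne_zero_of_mul (hpos d hd).ne'
  · simp [chainVec_apply_of_mem hnodup hd, mul_assoc, dartSign_mul_self]

theorem ker_incidenceMatrix_le_span_cycleVecs (hloop : ∀ e, s e ≠ t e) :
    LinearMap.ker (incidenceMatrix s t).mulVecLin ≤ Submodule.span ℝ (cycleVecs s t) := by
  classical
  intro γ hγ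
  rw [LinearMap.mem_ker, mulVecLin_apply] at hγ
  induction hn : (Finset.univ.filter (γ · ≠ 0)).card using Nat.strong_induction_on
    generalizing γ with
  | _ n ih =>
  by_cases h0 : γ = 0
  · exact h0 ▸ zero_mem _
  obtain ⟨e₀, he₀⟩ := Function.ne_iff.1 h0
  obtain ⟨a, l, hchain, hnodup, hne, hpos⟩ := exists_cycle_of_mulVec_eq_zero hloop hγ he₀
  obtain ⟨d, hd⟩ := List.exists_mem_of_ne_nil l hne
  have hcycle : chainVec l ∈ Submodule.span ℝ (cycleVecs s t) :=
    Submodule.subset_span (mem_cycleVecs_iff.2 ⟨a, l, hchain, hnodup, rfl⟩)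
  have hrest : γ - (γ d.1 * dartSign d) • chainVec l ∈ Submodule.span ℝ (cycleVecs s t) := by
    refine ih _ (hn ▸ card_support_sub_smul_chainVec_lt hnodup hpos hd) ?_ rfl
    rw [mulVec_sub, mulVec_smul, hγ, hchain.incidenceMatrix_mulVec_chainVec hloop]
    simp
  simpa using add_mem hrest (Submodule.smul_mem _ (γ d.1 * dartSign d) hcycle)

end Flow

/-- if `D` is the incidence matrix of a finite directed graph
without loops, with `m` vertices and `p` connected components (of the
underlying undirected graph), then `rank D = m - p`; moreover the kernel of
`D` is the cycle (flow) space and the row space of `D` is the cocycle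
(tension) space. -/
theorem incidence_matrix_rank_ker_range {V E : Type} [Fintype V] [Fintype E]
    [DecidableEq V] (s t : E → V) (hloop : ∀ e : E, s e ≠ t e) :
    (incidenceMatrix s t).rank +
        Nat.card (Quot (fun a b : V => ∃ l, IsChainL s t a l b)) =
      Fintype.card V ∧
    LinearMap.ker (incidenceMatrix s t).mulVecLin =
      Submodule.span ℝ (cycleVecs s t) ∧
    LinearMap.range (incidenceMatrix s t).transpose.mulVecLin =
      Submodule.span ℝ (cocycleVecs s t) :=
  ⟨rank_incidenceMatrix_add_card_quot hloop,
    (ker_incidenceMatrix_le_span_cycleVecs hloop).antisymm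
      (span_cycleVecs_le_ker_incidenceMatrix hloop),
    (span_cocycleVecs hloop).symm⟩
end
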